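/- Let A₂ be the quotient of the free noncommutative ℤ/2-algebra on five generators a₁, a₂, a₃, a₄, a₅ by the two-sided ideal generated by the five elements a₄a₂, a₁a₄ + a₃a₅, a₅a₂, 1 + a₂a₁, and 1 + a₂a₃. Then in A₂ the images of a₄ and a₅ are zero, and A₂ is isomorphic as a ℤ/2-algebra to C₂, the quotient of the free noncommutative ℤ/2-algebra on three generators a₁, a₂, a₃ by the two-sided ideal generated by a₂a₁ − 1 and a₂a₃ − 1. -/

import Mathlib

noncomputable section

/-- The quotient of a ℤ/2-algebra by a ring congruence is again a ℤ/2-algebra,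
via the quotient map. -/
noncomputable instance ringConQuotientAlgebra
    {R : Type*} [Ring R] [Algebra (ZMod 2) R] (c : RingCon R) :
    Algebra (ZMod 2) c.Quotient :=
  RingHom.toAlgebra' ((RingCon.mk' c).comp (algebraMap (ZMod 2) R)) (by
    intro r x
    show (RingCon.mk' c) (algebraMap (ZMod 2) R r) * x = x * (RingCon.mk' c) (algebraMap (ZMod 2) R r)
    have hr : r = 0 ∨ r = 1 := by revert r; decide
    rcases hr with rfl | rfl <;> simp [map_zero, map_one])

/-- The generators `a₁, …, a₅` of the free ℤ/2-algebra on five letters. -/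
def a (i : Fin 5) : FreeAlgebra (ZMod 2) (Fin 5) := FreeAlgebra.ι (ZMod 2) i

/-- The relations `a₄a₂`, `a₁a₄ + a₃a₅`, `a₅a₂`, `1 + a₂a₁`, `1 + a₂a₃` for the
characteristic algebra of the knot `L₂`. -/
def relA2 : Set (FreeAlgebra (ZMod 2) (Fin 5)) :=
  {a 3 * a 1, a 0 * a 3 + a 2 * a 4, a 4 * a 1, 1 + a 1 * a 0, 1 + a 1 * a 2}

/-- The characteristic algebra `A₂` of the knot `L₂`. -/
def A2 := (TwoSidedIdeal.span relA2).ringCon.Quotient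

instance : Ring A2 := inferInstanceAs (Ring (TwoSidedIdeal.span relA2).ringCon.Quotient)
instance : Algebra (ZMod 2) A2 :=
  inferInstanceAs (Algebra (ZMod 2) (TwoSidedIdeal.span relA2).ringCon.Quotient)

/-- The quotient map onto `A₂`. -/
def q2 : FreeAlgebra (ZMod 2) (Fin 5) →+* A2 :=
  RingCon.mk' (TwoSidedIdeal.span relA2).ringCon

/-- The generators of the free ℤ/2-algebra on three letters. -/
def c (i : Fin 3) : FreeAlgebra (ZMod 2) (Fin 3) := FreeAlgebra.ι (ZMod 2) i

/-- The simplified characteristic algebra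
`C₂ = ℤ₂⟨a₁, a₂, a₃⟩/(a₂a₁ − 1, a₂a₃ − 1)`. -/
def C2 := (TwoSidedIdeal.span {c 1 * c 0 - 1, c 1 * c 2 - 1}).ringCon.Quotient

instance : Ring C2 :=
  inferInstanceAs (Ring (TwoSidedIdeal.span {c 1 * c 0 - 1, c 1 * c 2 - 1}).ringCon.Quotient)
instance : Algebra (ZMod 2) C2 :=
  inferInstanceAs
    (Algebra (ZMod 2) (TwoSidedIdeal.span {c 1 * c 0 - 1, c 1 * c 2 - 1}).ringCon.Quotient)

/-! In characteristic 2 the relations `1 + a₂a₁`, `1 + a₂a₃` say that `a₂` has the right inverses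
`a₁` and `a₃`, so `a₂` is right regular and `a₄a₂ = a₅a₂ = 0` forces `a₄ = a₅ = 0`; the remaining
relation `a₁a₄ + a₃a₅` then holds automatically. Hence sending `a₄, a₅ ↦ 0` and keeping
`a₁, a₂, a₃` gives mutually inverse maps between the two presentations. Below, `a i` and `c i` are the
paper's `aᵢ₊₁`. -/

theorem TwoSidedIdeal.ringCon_span_le_ker {R S : Type*} [Ring R] [Ring S] {s : Set R}
    {f : R →+* S} (hs : ∀ r ∈ s, f r = 0) : (span s).ringCon ≤ RingCon.ker f :=
  ringCon_le_iff.mp (span_le.mpr fun r hr => (mem_ker f).mpr (hs r hr))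

theorem one_add_eq_zero_iff_eq_one {A : Type*} [Ring A] [Algebra (ZMod 2) A] {x : A} :
    1 + x = 0 ↔ x = 1 := by
  have neg_one : (-1 : A) = 1 := by
    rw [← map_one (algebraMap (ZMod 2) A), ← map_neg]
    exact congrArg _ (by decide)
  rw [add_eq_zero_iff_neg_eq, neg_one, eq_comm]

abbrev PresentedAlgebra (K : Type*) {X : Type*} [CommRing K] (s : Set (FreeAlgebra K X)) :=
  (TwoSidedIdeal.span s).ringCon.Quotient

namespace PresentedAlgebra

variable {K X A : Type*} [CommRing K] [Ring A] [Algebra K A] {s : Set (FreeAlgebra K X)}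

variable (K s) in
def mk : FreeAlgebra K X →+* PresentedAlgebra K s :=
  RingCon.mk' _

theorem mk_eq_zero_of_mem {r : FreeAlgebra K X} (hr : r ∈ s) : mk K s r = 0 :=
  (TwoSidedIdeal.mem_ker (mk K s)).mp <| by
    rw [mk, TwoSidedIdeal.ker_ringCon_mk']
    exact TwoSidedIdeal.subset_span hr

def lift (g : X → A) (hg : ∀ r ∈ s, FreeAlgebra.lift K g r = 0) :
    PresentedAlgebra K s →ₐ[K] A :=
  RingCon.liftₐ _ (FreeAlgebra.lift K g) (TwoSidedIdeal.ringCon_span_le_ker hg)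

@[simp]
theorem lift_mk_ι (g : X → A) (hg : ∀ r ∈ s, FreeAlgebra.lift K g r = 0) (x : X) :
    lift g hg (mk K s (FreeAlgebra.ι K x)) = g x :=
  FreeAlgebra.lift_ι_apply g x

theorem hom_ext {f f' : PresentedAlgebra K s →ₐ[K] A}
    (h : ∀ x, f (mk K s (FreeAlgebra.ι K x)) = f' (mk K s (FreeAlgebra.ι K x))) : f = f' :=
  RingCon.Quotient.hom_extₐ (FreeAlgebra.hom_ext (funext h))

end PresentedAlgebra

theorem q2_eq_zero_of_mem {r : FreeAlgebra (ZMod 2) (Fin 5)} (hr : r ∈ relA2) : q2 r = 0 :=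
  PresentedAlgebra.mk_eq_zero_of_mem hr

theorem q2_a1_mul_a0 : q2 (a 1) * q2 (a 0) = 1 := by
  rw [← map_mul, ← one_add_eq_zero_iff_eq_one, ← map_one q2, ← map_add]
  exact q2_eq_zero_of_mem (by simp [relA2])

theorem q2_a1_mul_a2 : q2 (a 1) * q2 (a 2) = 1 := by
  rw [← map_mul, ← one_add_eq_zero_iff_eq_one, ← map_one q2, ← map_add]
  exact q2_eq_zero_of_mem (by simp [relA2])

theorem q2_eq_zero_of_mul_a1_eq_zero {x : FreeAlgebra (ZMod 2) (Fin 5)}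
    (h : q2 (x * a 1) = 0) : q2 x = 0 :=
  (isRightRegular_of_mul_eq_one q2_a1_mul_a0).mul_right_eq_zero_iff.mp (by rwa [← map_mul])

theorem q2_a3_eq_zero : q2 (a 3) = 0 :=
  q2_eq_zero_of_mul_a1_eq_zero (q2_eq_zero_of_mem (by simp [relA2]))

theorem q2_a4_eq_zero : q2 (a 4) = 0 :=
  q2_eq_zero_of_mul_a1_eq_zero (q2_eq_zero_of_mem (by simp [relA2]))

def qc : FreeAlgebra (ZMod 2) (Fin 3) →+* C2 :=
  PresentedAlgebra.mk _ _

theorem qc_c1_mul_c0 : qc (c 1) * qc (c 0) = 1 := by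
  rw [← map_mul, ← sub_eq_zero, ← map_one qc, ← map_sub]
  exact PresentedAlgebra.mk_eq_zero_of_mem (by simp)

theorem qc_c1_mul_c2 : qc (c 1) * qc (c 2) = 1 := by
  rw [← map_mul, ← sub_eq_zero, ← map_one qc, ← map_sub]
  exact PresentedAlgebra.mk_eq_zero_of_mem (by simp)

def A2.toC2 : A2 →ₐ[ZMod 2] C2 :=
  PresentedAlgebra.lift ![qc (c 0), qc (c 1), qc (c 2), 0, 0] (by
    simp only [relA2, Set.mem_insert_iff, Set.mem_singleton_iff]
    rintro r (rfl | rfl | rfl | rfl | rfl) <;>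
      simp [a, qc_c1_mul_c0, qc_c1_mul_c2, one_add_eq_zero_iff_eq_one])

def C2.toA2 : C2 →ₐ[ZMod 2] A2 :=
  PresentedAlgebra.lift ![q2 (a 0), q2 (a 1), q2 (a 2)] (by
    simp only [Set.mem_insert_iff, Set.mem_singleton_iff]
    rintro r (rfl | rfl) <;> simp [c, q2_a1_mul_a0, q2_a1_mul_a2])

@[simp]
theorem A2.toC2_q2_a (i : Fin 5) :
    A2.toC2 (q2 (a i)) = ![qc (c 0), qc (c 1), qc (c 2), 0, 0] i :=
  PresentedAlgebra.lift_mk_ι _ _ i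

@[simp]
theorem C2.toA2_qc_c (i : Fin 3) : C2.toA2 (qc (c i)) = ![q2 (a 0), q2 (a 1), q2 (a 2)] i :=
  PresentedAlgebra.lift_mk_ι _ _ i

def A2.equivC2 : A2 ≃ₐ[ZMod 2] C2 :=
  AlgEquiv.ofAlgHom A2.toC2 C2.toA2
    (PresentedAlgebra.hom_ext fun i => by
      change A2.toC2 (C2.toA2 (qc (c i))) = qc (c i)
      fin_cases i <;> simp)
    (PresentedAlgebra.hom_ext fun i => by
      change C2.toA2 (A2.toC2 (q2 (a i))) = q2 (a i)
      fin_cases i <;> simp [q2_a3_eq_zero, q2_a4_eq_zero])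

/-- In `A₂` the images of `a₄` and `a₅` vanish, and `A₂` is isomorphic as a
ℤ/2-algebra to `C₂ = ℤ₂⟨a₁, a₂, a₃⟩/(1 = a₂a₁ = a₂a₃)`. -/
theorem charAlgebraL2_simplification :
    q2 (a 3) = 0 ∧ q2 (a 4) = 0 ∧ Nonempty (A2 ≃ₐ[ZMod 2] C2) :=
  ⟨q2_a3_eq_zero, q2_a4_eq_zero, ⟨A2.equivC2⟩⟩

end
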